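/- (LASSO error bound) Let x ∈ R^n have support of size k, y = Ax + w with ‖Aᵀw‖_∞ ≤ κλσ for some κ ∈ (0,1), and let x̂ minimize (1/2)‖y − Az‖₂² + λσ‖z‖₁ over z ∈ R^n. If ρ_s(A) > 0 for s = 4k/(1−κ)², then ‖x̂ − x‖₂ ≤ ((1+κ)/(1−κ)) · 2√k λσ / ρ_s(A)². -/

import Mathlib

/-!
Put `h = x̂ - x` and let `T` be the support of `x`. Comparing the objective at `x̂` with its value
at `x` and bounding `⟨Aᵀw, h⟩ ≤ κλσ‖h‖₁` gives
`½‖Ah‖₂² ≤ λσ ((1 + κ)‖h_T‖₁ - (1 - κ)‖h_Tᶜ‖₁)`.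
The right side is therefore nonnegative, so `h` lies in the cone `(1 - κ)‖h_Tᶜ‖₁ ≤ (1 + κ)‖h_T‖₁`,
whence `‖h‖₁ ≤ 2‖h_T‖₁ / (1 - κ) ≤ 2√k‖h‖₂ / (1 - κ)` and `h` is admissible for `ρ = ρ_s(A)`.
Hence `ρ²‖h‖₂² ≤ ‖Ah‖₂² ≤ 2(1 + κ)λσ√k‖h‖₂`, which is the bound even with `1 + κ` in place of
`(1 + κ)/(1 - κ)`.
-/

open Finset

noncomputable def l1norm {n : ℕ} (x : Fin n → ℝ) : ℝ := ∑ i, |x i|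
noncomputable def l2norm {n : ℕ} (x : Fin n → ℝ) : ℝ := Real.sqrt (∑ i, (x i)^2)
noncomputable def linfnorm {n : ℕ} (x : Fin n → ℝ) : ℝ := ⨆ i, |x i|

noncomputable def cmsv {m n : ℕ} (A : Matrix (Fin m) (Fin n) ℝ) (s : ℝ) : ℝ :=
  sInf {r | ∃ x : Fin n → ℝ, x ≠ 0 ∧ (l1norm x)^2 ≤ s * (l2norm x)^2 ∧
    r = l2norm (A.mulVec x) / l2norm x}

open Matrix

section Norms

variable {n : ℕ}

lemma l2norm_nonneg (v : Fin n → ℝ) : 0 ≤ l2norm v := Real.sqrt_nonneg _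

lemma sq_l2norm (v : Fin n → ℝ) : l2norm v ^ 2 = ∑ i, v i ^ 2 :=
  Real.sq_sqrt (sum_nonneg fun _ _ => sq_nonneg _)

lemma l2norm_pos {v : Fin n → ℝ} (hv : v ≠ 0) : 0 < l2norm v := by
  obtain ⟨i, hi⟩ := Function.ne_iff.mp hv
  exact Real.sqrt_pos.mpr
    (sum_pos' (fun _ _ => sq_nonneg _) ⟨i, mem_univ i, pow_two_pos_of_ne_zero hi⟩)

lemma sq_l2norm_sub (u v : Fin n → ℝ) :
    l2norm (u - v) ^ 2 = l2norm u ^ 2 - 2 * (u ⬝ᵥ v) + l2norm v ^ 2 := by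
  simp only [sq_l2norm, dotProduct, Pi.sub_apply, sub_sq, sum_add_distrib, sum_sub_distrib,
    mul_sum, mul_assoc]

lemma abs_le_linfnorm (u : Fin n → ℝ) (i : Fin n) : |u i| ≤ linfnorm u :=
  le_ciSup (f := fun i => |u i|) (Set.finite_range _).bddAbove i

lemma dotProduct_le_linfnorm_mul_l1norm (u v : Fin n → ℝ) : u ⬝ᵥ v ≤ linfnorm u * l1norm v := by
  rw [l1norm, mul_sum]
  refine sum_le_sum fun i _ => ?_
  calc u i * v i ≤ |u i| * |v i| := by rw [← abs_mul]; exact le_abs_self _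
    _ ≤ linfnorm u * |v i| := by gcongr; exact abs_le_linfnorm u i

lemma l1norm_eq_sum_add_sum_compl (v : Fin n → ℝ) (s : Finset (Fin n)) :
    l1norm v = ∑ i ∈ s, |v i| + ∑ i ∈ sᶜ, |v i| :=
  (sum_add_sum_compl s _).symm

lemma sq_sum_abs_le_card_mul_sq_l2norm (v : Fin n → ℝ) (s : Finset (Fin n)) :
    (∑ i ∈ s, |v i|) ^ 2 ≤ (#s : ℝ) * l2norm v ^ 2 := by
  calc (∑ i ∈ s, |v i|) ^ 2 ≤ (#s : ℝ) * ∑ i ∈ s, |v i| ^ 2 :=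
      sq_sum_le_card_mul_sum_sq (s := s) (f := fun i => |v i|)
    _ ≤ (#s : ℝ) * l2norm v ^ 2 := by
      simp only [sq_abs, sq_l2norm]
      gcongr
      exact subset_univ s

lemma sum_abs_le_sqrt_card_mul_l2norm (v : Fin n → ℝ) (s : Finset (Fin n)) :
    ∑ i ∈ s, |v i| ≤ √(#s : ℝ) * l2norm v := by
  rw [← Real.sqrt_sq (l2norm_nonneg v), ← Real.sqrt_mul (Nat.cast_nonneg _)]
  exact Real.le_sqrt_of_sq_le (sq_sum_abs_le_card_mul_sq_l2norm v s)

lemma sq_l1norm_le_of_cone {v : Fin n → ℝ} {s : Finset (Fin n)} {κ : ℝ} (hκ : κ < 1)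
    (hcone : (1 - κ) * ∑ i ∈ sᶜ, |v i| ≤ (1 + κ) * ∑ i ∈ s, |v i|) :
    l1norm v ^ 2 ≤ 4 * #s / (1 - κ) ^ 2 * l2norm v ^ 2 := by
  have hl1 : (1 - κ) * l1norm v ≤ 2 * ∑ i ∈ s, |v i| := by
    rw [l1norm_eq_sum_add_sum_compl v s]
    linarith
  rw [div_mul_eq_mul_div, le_div_iff₀ (pow_pos (sub_pos.mpr hκ) 2), mul_comm _ ((1 - κ) ^ 2),
    ← mul_pow]
  calc ((1 - κ) * l1norm v) ^ 2 ≤ (2 * ∑ i ∈ s, |v i|) ^ 2 := by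
        gcongr
        exact mul_nonneg (by linarith) (sum_nonneg fun _ _ => abs_nonneg _)
    _ ≤ 4 * (#s * l2norm v ^ 2) := by
        rw [mul_pow]
        gcongr
        · norm_num
        · exact sq_sum_abs_le_card_mul_sq_l2norm v s
    _ = 4 * #s * l2norm v ^ 2 := by ring

lemma l1norm_sub_l1norm_le (x xhat : Fin n → ℝ) (s : Finset (Fin n))
    (hx : ∀ i ∉ s, x i = 0) :
    l1norm x - l1norm xhat ≤ ∑ i ∈ s, |(xhat - x) i| - ∑ i ∈ sᶜ, |(xhat - x) i| := by
  have hon : ∑ i ∈ s, |x i| - ∑ i ∈ s, |xhat i| ≤ ∑ i ∈ s, |(xhat - x) i| := by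
    rw [← sum_sub_distrib]
    refine sum_le_sum fun i _ => ?_
    rw [Pi.sub_apply, abs_sub_comm]
    exact abs_sub_abs_le_abs_sub _ _
  have hoff : ∀ v : Fin n → ℝ, ∑ i ∈ sᶜ, |(v - x) i| = ∑ i ∈ sᶜ, |v i| := fun v =>
    sum_congr rfl fun i hi => by rw [Pi.sub_apply, hx i (mem_compl.mp hi), sub_zero]
  have hx0 : ∑ i ∈ sᶜ, |x i| = 0 := by simpa using hoff 0
  rw [l1norm_eq_sum_add_sum_compl x s, l1norm_eq_sum_add_sum_compl xhat s, hoff, hx0]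
  linarith

end Norms

lemma cmsv_mul_l2norm_le {m n : ℕ} (A : Matrix (Fin m) (Fin n) ℝ) {s : ℝ} {z : Fin n → ℝ}
    (hz : l1norm z ^ 2 ≤ s * l2norm z ^ 2) : cmsv A s * l2norm z ≤ l2norm (A *ᵥ z) := by
  rcases eq_or_ne z 0 with rfl | hz0
  · simp [l2norm]
  have hpos := l2norm_pos hz0
  rw [← le_div_iff₀ hpos]
  refine csInf_le ⟨0, ?_⟩ ⟨z, hz0, hz, rfl⟩
  rintro r ⟨v, -, -, rfl⟩
  exact div_nonneg (l2norm_nonneg _) (l2norm_nonneg _)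

lemma le_div_sq_of_sq_mul_le {ρ N c : ℝ} (hρ : 0 < ρ) (hN : 0 ≤ N) (hc : 0 ≤ c)
    (h : (ρ * N) ^ 2 ≤ c * N) : N ≤ c / ρ ^ 2 := by
  rcases hN.eq_or_lt with rfl | hN
  · positivity
  rw [le_div_iff₀ (by positivity)]
  refine le_of_mul_le_mul_right ?_ hN
  linarith

section Lasso

variable {m n : ℕ} (A : Matrix (Fin m) (Fin n) ℝ) (x xhat : Fin n → ℝ) (w y : Fin m → ℝ)
  {lamsig κ : ℝ}

lemma lasso_basic_inequality (hy : y = A *ᵥ x + w)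
    (hmin : (1/2) * l2norm (y - A *ᵥ xhat) ^ 2 + lamsig * l1norm xhat ≤
      (1/2) * l2norm (y - A *ᵥ x) ^ 2 + lamsig * l1norm x) :
    (1/2) * l2norm (A *ᵥ (xhat - x)) ^ 2 ≤
      (Aᵀ *ᵥ w) ⬝ᵥ (xhat - x) + lamsig * (l1norm x - l1norm xhat) := by
  have hx : y - A *ᵥ x = w := by rw [hy]; abel
  have hxhat : y - A *ᵥ xhat = w - A *ᵥ (xhat - x) := by rw [hy, mulVec_sub]; abel
  rw [hx, hxhat, sq_l2norm_sub, dotProduct_mulVec, ← mulVec_transpose] at hmin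
  linarith

lemma lasso_cone_inequality (s : Finset (Fin n)) (hx : ∀ i ∉ s, x i = 0) (hls : 0 ≤ lamsig)
    (hy : y = A *ᵥ x + w) (hw : linfnorm (Aᵀ *ᵥ w) ≤ κ * lamsig)
    (hmin : (1/2) * l2norm (y - A *ᵥ xhat) ^ 2 + lamsig * l1norm xhat ≤
      (1/2) * l2norm (y - A *ᵥ x) ^ 2 + lamsig * l1norm x) :
    (1/2) * l2norm (A *ᵥ (xhat - x)) ^ 2 ≤
      lamsig * ((1 + κ) * ∑ i ∈ s, |(xhat - x) i| - (1 - κ) * ∑ i ∈ sᶜ, |(xhat - x) i|) := by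
  have hbasic := lasso_basic_inequality A x xhat w y hy hmin
  have hnoise : (Aᵀ *ᵥ w) ⬝ᵥ (xhat - x) ≤ κ * lamsig * l1norm (xhat - x) :=
    (dotProduct_le_linfnorm_mul_l1norm _ _).trans
      (mul_le_mul_of_nonneg_right hw (sum_nonneg fun _ _ => abs_nonneg _))
  have hsupp := mul_le_mul_of_nonneg_left (l1norm_sub_l1norm_le x xhat s hx) hls
  rw [l1norm_eq_sum_add_sum_compl _ s] at hnoise
  linarith

theorem lasso_error_bound_of_support (s : Finset (Fin n)) (hx : ∀ i ∉ s, x i = 0)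
    (hls : 0 < lamsig) (hκ0 : 0 ≤ κ) (hκ1 : κ < 1)
    (hy : y = A *ᵥ x + w) (hw : linfnorm (Aᵀ *ᵥ w) ≤ κ * lamsig)
    (hmin : (1/2) * l2norm (y - A *ᵥ xhat) ^ 2 + lamsig * l1norm xhat ≤
      (1/2) * l2norm (y - A *ᵥ x) ^ 2 + lamsig * l1norm x)
    (hρ : 0 < cmsv A (4 * #s / (1 - κ) ^ 2)) :
    l2norm (xhat - x) ≤ (1 + κ) * (2 * √(#s : ℝ) * lamsig / cmsv A (4 * #s / (1 - κ) ^ 2) ^ 2) := by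
  set h := xhat - x
  set ρ := cmsv A (4 * #s / (1 - κ) ^ 2)
  have hcone_ineq := lasso_cone_inequality A x xhat w y s hx hls.le hy hw hmin
  have hcone : (1 - κ) * ∑ i ∈ sᶜ, |h i| ≤ (1 + κ) * ∑ i ∈ s, |h i| := by
    nlinarith [sq_nonneg (l2norm (A *ᵥ h))]
  have hρN : ρ * l2norm h ≤ l2norm (A *ᵥ h) :=
    cmsv_mul_l2norm_le A (sq_l1norm_le_of_cone hκ1 hcone)
  have hS1 := sum_abs_le_sqrt_card_mul_l2norm h s
  have hS1' := mul_le_mul_of_nonneg_left hS1 (by linarith : 0 ≤ 1 + κ)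
  have hS2 : 0 ≤ (1 - κ) * ∑ i ∈ sᶜ, |h i| :=
    mul_nonneg (by linarith) (sum_nonneg fun _ _ => abs_nonneg _)
  have key : (ρ * l2norm h) ^ 2 ≤ 2 * (1 + κ) * √(#s : ℝ) * lamsig * l2norm h := by
    calc (ρ * l2norm h) ^ 2 ≤ l2norm (A *ᵥ h) ^ 2 := by
          gcongr
          exact mul_nonneg hρ.le (l2norm_nonneg h)
      _ ≤ 2 * lamsig * ((1 + κ) * ∑ i ∈ s, |h i| - (1 - κ) * ∑ i ∈ sᶜ, |h i|) := by linarith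
      _ ≤ 2 * lamsig * ((1 + κ) * (√(#s : ℝ) * l2norm h)) := by
          gcongr 2 * lamsig * ?_
          linarith
      _ = 2 * (1 + κ) * √(#s : ℝ) * lamsig * l2norm h := by ring
  calc l2norm h ≤ 2 * (1 + κ) * √(#s : ℝ) * lamsig / ρ ^ 2 :=
        le_div_sq_of_sq_mul_le hρ (l2norm_nonneg h) (by positivity) key
    _ = (1 + κ) * (2 * √(#s : ℝ) * lamsig / ρ ^ 2) := by ring

end Lasso

theorem lasso_error_bound {m n k : ℕ} (A : Matrix (Fin m) (Fin n) ℝ)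
    (x xhat : Fin n → ℝ) (w : Fin m → ℝ) (y : Fin m → ℝ) (lamsig κ : ℝ)
    (hls : 0 < lamsig) (hκ : κ ∈ Set.Ioo (0:ℝ) 1)
    (hk : (Finset.univ.filter fun i => x i ≠ 0).card = k)
    (hy : y = A.mulVec x + w)
    (hw : linfnorm (A.transpose.mulVec w) ≤ κ * lamsig)
    (hmin : ∀ z : Fin n → ℝ,
      (1/2) * (l2norm (y - A.mulVec xhat))^2 + lamsig * l1norm xhat ≤
      (1/2) * (l2norm (y - A.mulVec z))^2 + lamsig * l1norm z)
    (hρ : 0 < cmsv A (4 * k / (1 - κ)^2)) :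
    l2norm (xhat - x) ≤
      (1 + κ) / (1 - κ) * (2 * Real.sqrt k * lamsig / (cmsv A (4 * k / (1 - κ)^2))^2) := by
  obtain ⟨hκ0, hκ1⟩ := hκ
  have hsupp : ∀ i ∉ univ.filter fun i => x i ≠ 0, x i = 0 := fun i hi => by simpa using hi
  have hsharp := lasso_error_bound_of_support A x xhat w y _ hsupp hls hκ0.le hκ1 hy hw (hmin x)
    (by rwa [hk])
  rw [hk] at hsharp
  refine hsharp.trans (mul_le_mul_of_nonneg_right ?_ (by positivity))
  exact le_div_self (by linarith) (by linarith) (by linarith)
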